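/- For every integer n ≥ 2, the set of extreme points of the flow polytope F_{K_{n+1}}(1, 1, 0, …, 0, −2) has exactly 2 · 3^{n−2} elements. -/

import Mathlib

/-!
A point `x` of `{x | 0 ≤ x ∧ L x = a}` is extreme iff no nonzero vector of `ker L` is supported
inside the support of `x`. For a flow polytope whose supply is nonnegative away from the sink
this says that at most one edge of the support leaves each vertex: two such edges, each continued
to the sink by a path in the support, differ by a nonzero circulation; conversely a circulation
carried by such a forest vanishes, since at the lowest vertex it uses nothing enters and only
one edge leaves.

A vertex of `F(1,1,0,…,0,-2)` is therefore the sum of the unit flows along a path `P` from `0`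
and a path `Q` from `1` to the sink which stay together once they meet, and it determines `P`
and `Q`. Recording for each vertex whether it lies on `P` and on `Q` turns these pairs into the
words over `{∅, P, Q, PQ}` in which only `∅` and `PQ` follow a `PQ`. Among the words ending in
`PQ`, the number of these plus the number of those using only `∅` and `PQ` triples with every
letter added in front.
-/

open Finset

/-- The edge set of the complete graph `K_{n+1}`: pairs `(i,j)` with `i < j`. -/
abbrev FlowEdge (n : ℕ) := {p : Fin (n + 1) × Fin (n + 1) // p.1 < p.2}

/-- The flow polytope `F_{K_{n+1}}(a)` of the complete graph `K_{n+1}` with netflow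
vector `a`: nonnegative functions on the edge set such that at every vertex `k`,
(outgoing flow) − (incoming flow) = `a k`. -/
def flowPolytope (n : ℕ) (a : Fin (n + 1) → ℝ) : Set (FlowEdge n → ℝ) :=
  {f | (∀ e, 0 ≤ f e) ∧
    ∀ k : Fin (n + 1),
      (∑ e : FlowEdge n, if e.1.1 = k then f e else 0)
        - (∑ e : FlowEdge n, if e.1.2 = k then f e else 0) = a k}

section ExtremePoints

open Filter Topology

variable {ι M : Type*} [Fintype ι] [AddCommGroup M] [Module ℝ M] {L : (ι → ℝ) →ₗ[ℝ] M}
  {a : M} {x y : ι → ℝ}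

theorem mem_extremePoints_iff_ker (hx : x ∈ {y | 0 ≤ y ∧ L y = a}) :
    x ∈ Set.extremePoints ℝ {y | 0 ≤ y ∧ L y = a} ↔
      ∀ c ∈ LinearMap.ker L, Function.support c ⊆ Function.support x → c = 0 := by
  have hx0 : ∀ i, 0 ≤ x i := hx.1
  refine ⟨fun hext c hc hcx => ?_, fun h => ⟨hx, ?_⟩⟩
  · have hsmall (i : ι) : ∀ᶠ ε in 𝓝 (0 : ℝ), |ε * c i| ≤ x i := by
      by_cases hci : c i = 0
      · simp [hci, hx0 i]
      have hxi : 0 < x i := lt_of_le_of_ne (hx0 i) (Ne.symm (hcx hci))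
      have hcont : Continuous fun ε : ℝ => |ε * c i| := by fun_prop
      exact hcont.tendsto' 0 0 (by simp) |>.eventually (ge_mem_nhds hxi)
    obtain ⟨ε, hε, hεc⟩ := (eventually_all.2 hsmall).exists_gt
    have hmem (s : ℝ) (hs : |s| = ε) : x + s • c ∈ {y | 0 ≤ y ∧ L y = a} := by
      refine ⟨fun i => ?_, by rw [map_add, map_smul, LinearMap.mem_ker.1 hc, smul_zero,
        add_zero, hx.2]⟩
      have hi : |s * c i| ≤ x i := by rw [abs_mul, hs, ← abs_of_pos hε, ← abs_mul]; exact hεc i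
      simp only [Pi.add_apply, Pi.smul_apply, smul_eq_mul, Pi.zero_apply]
      linarith [neg_abs_le (s * c i)]
    have hseg : x ∈ openSegment ℝ (x + ε • c) (x + (-ε) • c) :=
      ⟨1 / 2, 1 / 2, by norm_num, by norm_num, by norm_num, by rw [neg_smul]; module⟩
    simpa [hε.ne'] using hext.2 (hmem ε (abs_of_pos hε)) (hmem (-ε) (by simp [hε.le])) hseg
  · rintro y hy z hz ⟨α, β, hα, hβ, hαβ, rfl⟩
    have hyz : y - z = 0 := by
      refine h _ (by simp [LinearMap.mem_ker, hy.2, hz.2]) fun i hi hi0 => hi ?_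
      simp only [Pi.add_apply, Pi.smul_apply, smul_eq_mul] at hi0
      have hyi : 0 ≤ y i := hy.1 i
      have hzi : 0 ≤ z i := hz.1 i
      have hy0 : y i = 0 := by nlinarith
      have hz0 : z i = 0 := by nlinarith
      simp [hy0, hz0]
    rw [sub_eq_zero.1 hyz, ← add_smul, hαβ, one_smul]

theorem eq_of_mem_extremePoints_of_support_subset
    (hx : x ∈ Set.extremePoints ℝ {y | 0 ≤ y ∧ L y = a}) (hy : y ∈ {y | 0 ≤ y ∧ L y = a})
    (hyx : Function.support y ⊆ Function.support x) : y = x := by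
  refine sub_eq_zero.1 ((mem_extremePoints_iff_ker hx.1).1 hx _ ?_ fun i hi => ?_)
  · simp [LinearMap.mem_ker, hy.2, hx.1.2]
  · by_contra hxi
    exact hi (by simp [Function.notMem_support.1 hxi, Function.notMem_support.1 (mt (@hyx i) hxi)])

end ExtremePoints

namespace FlowPolytope

variable {n : ℕ}

def outflow : (FlowEdge n → ℝ) →ₗ[ℝ] Fin (n + 1) → ℝ where
  toFun f k := ∑ e : FlowEdge n, if e.1.1 = k then f e else 0
  map_add' f g := by ext k; simp [← sum_add_distrib, ite_add_ite]
  map_smul' c f := by ext k; simp [mul_sum]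

def inflow : (FlowEdge n → ℝ) →ₗ[ℝ] Fin (n + 1) → ℝ where
  toFun f k := ∑ e : FlowEdge n, if e.1.2 = k then f e else 0
  map_add' f g := by ext k; simp [← sum_add_distrib, ite_add_ite]
  map_smul' c f := by ext k; simp [mul_sum]

def netFlow : (FlowEdge n → ℝ) →ₗ[ℝ] Fin (n + 1) → ℝ := outflow - inflow

theorem outflow_apply (f : FlowEdge n → ℝ) (k : Fin (n + 1)) :
    outflow f k = ∑ e : FlowEdge n, if e.1.1 = k then f e else 0 := rfl

theorem inflow_apply (f : FlowEdge n → ℝ) (k : Fin (n + 1)) :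
    inflow f k = ∑ e : FlowEdge n, if e.1.2 = k then f e else 0 := rfl

theorem netFlow_apply (f : FlowEdge n → ℝ) (k : Fin (n + 1)) :
    netFlow f k = outflow f k - inflow f k := rfl

theorem flowPolytope_eq (a : Fin (n + 1) → ℝ) :
    flowPolytope n a = {f | 0 ≤ f ∧ netFlow f = a} := by
  ext f
  simp [flowPolytope, Pi.le_def, funext_iff, netFlow_apply, outflow_apply, inflow_apply]

variable {a : Fin (n + 1) → ℝ} {f c : FlowEdge n → ℝ}

theorem mem_flowPolytope : f ∈ flowPolytope n a ↔ 0 ≤ f ∧ netFlow f = a := by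
  rw [flowPolytope_eq]; rfl

theorem outflow_single (e : FlowEdge n) : outflow (Pi.single e 1) = Pi.single e.1.1 1 := by
  ext k
  rw [outflow_apply, sum_eq_single e (fun b _ hb => by simp [hb]) (by simp)]
  simp [Pi.single_apply, eq_comm]

theorem inflow_single (e : FlowEdge n) : inflow (Pi.single e 1) = Pi.single e.1.2 1 := by
  ext k
  rw [inflow_apply, sum_eq_single e (fun b _ hb => by simp [hb]) (by simp)]
  simp [Pi.single_apply, eq_comm]

theorem netFlow_single (e : FlowEdge n) :
    netFlow (Pi.single e 1) = Pi.single e.1.1 1 - Pi.single e.1.2 1 := by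
  simp [netFlow, outflow_single, inflow_single]

theorem le_inflow (hf : 0 ≤ f) (e : FlowEdge n) : f e ≤ inflow f e.1.2 := by
  rw [inflow_apply]
  simpa using single_le_sum (f := fun e' : FlowEdge n => if e'.1.2 = e.1.2 then f e' else 0)
    (fun e' _ => by split_ifs; exacts [hf e', le_rfl]) (mem_univ e)

theorem inflow_nonneg (hf : 0 ≤ f) (k : Fin (n + 1)) : 0 ≤ inflow f k :=
  sum_nonneg fun e _ => by split_ifs; exacts [hf e, le_rfl]

theorem outflow_pos (hf : f ∈ flowPolytope n a) {v : Fin (n + 1)} (hv : 0 < a v) :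
    0 < outflow f v := by
  obtain ⟨hf0, hfa⟩ := mem_flowPolytope.1 hf
  have hnet : outflow f v - inflow f v = a v := congrFun hfa v
  linarith [inflow_nonneg hf0 v]

theorem exists_pos_of_outflow_pos {k : Fin (n + 1)} (h : 0 < outflow f k) :
    ∃ e : FlowEdge n, e.1.1 = k ∧ 0 < f e := by
  obtain ⟨e, -, he⟩ := exists_lt_of_sum_lt (s := univ) (f := fun _ => (0 : ℝ))
    (g := fun e : FlowEdge n => if e.1.1 = k then f e else 0) (by rw [sum_const_zero]; exact h)
  split_ifs at he with hk
  exacts [⟨e, hk, he⟩, absurd he (lt_irrefl 0)]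

theorem eq_zero_of_netFlow_eq_zero (hf : Set.InjOn (fun e : FlowEdge n => e.1.1) f.support)
    (hc : netFlow c = 0) (hcf : c.support ⊆ f.support) : c = 0 := by
  by_contra hne
  obtain ⟨e₀, he₀, hmin⟩ := exists_min_image {e | c e ≠ 0} (fun e => e.1.1)
    (by simpa [Finset.Nonempty, funext_iff] using hne)
  rw [mem_filter] at he₀
  have hin : inflow c e₀.1.1 = 0 := sum_eq_zero fun e _ => by
    rw [ite_eq_right_iff]
    intro he
    by_contra hce
    exact (he ▸ e.2).not_ge (hmin e (by simpa using hce))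
  have hout : outflow c e₀.1.1 = c e₀ := by
    rw [outflow_apply, sum_eq_single e₀ _ (by simp), if_pos rfl]
    intro e _ hne
    rw [ite_eq_right_iff]
    intro he
    by_contra hce
    exact hne (hf (hcf hce) (hcf he₀.2) he)
  have hnet := congrFun hc e₀.1.1
  rw [netFlow_apply, hin, hout, sub_zero] at hnet
  exact he₀.2 hnet

theorem mem_extremePoints_of_injOn (hf : f ∈ flowPolytope n a)
    (hinj : Set.InjOn (fun e : FlowEdge n => e.1.1) f.support) :
    f ∈ (flowPolytope n a).extremePoints ℝ := by
  rw [flowPolytope_eq] at hf ⊢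
  exact (mem_extremePoints_iff_ker hf).2 fun c hc hcf => eq_zero_of_netFlow_eq_zero hinj hc hcf

def IsPathEdge (S : Finset (Fin (n + 1))) (e : FlowEdge n) : Prop :=
  e.1.1 ∈ S ∧ e.1.2 ∈ S ∧ ∀ w ∈ S, w ≤ e.1.1 ∨ e.1.2 ≤ w

instance (S : Finset (Fin (n + 1))) : DecidablePred (IsPathEdge S) :=
  fun _ => inferInstanceAs (Decidable (_ ∧ _ ∧ _))

def pathFlow (S : Finset (Fin (n + 1))) (e : FlowEdge n) : ℝ := if IsPathEdge S e then 1 else 0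

namespace IsPathEdge

variable {S T : Finset (Fin (n + 1))} {e e' : FlowEdge n} {x y w : Fin (n + 1)}

theorem snd_le (h : IsPathEdge S e) (hw : w ∈ S) (hlt : e.1.1 < w) : e.1.2 ≤ w :=
  (h.2.2 w hw).resolve_left hlt.not_ge

theorem le_fst (h : IsPathEdge S e) (hw : w ∈ S) (hlt : w < e.1.2) : w ≤ e.1.1 :=
  (h.2.2 w hw).resolve_right hlt.not_ge

theorem eq_of_agree (h : IsPathEdge S e) (h' : IsPathEdge T e') (hs : e.1.1 = e'.1.1)
    (hST : ∀ w, e.1.1 < w → (w ∈ S ↔ w ∈ T)) : e = e' :=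
  Subtype.ext <| Prod.ext hs <| le_antisymm
    (h.snd_le ((hST _ (hs.trans_lt e'.2)).2 h'.2.1) (hs.trans_lt e'.2))
    (h'.snd_le ((hST _ e.2).1 h.2.1) (hs.symm.trans_lt e.2))

theorem eq_of_fst_eq (h : IsPathEdge S e) (h' : IsPathEdge S e') (hs : e.1.1 = e'.1.1) :
    e = e' :=
  h.eq_of_agree h' hs fun _ _ => Iff.rfl

theorem eq_of_snd_eq (h : IsPathEdge S e) (h' : IsPathEdge S e') (hs : e.1.2 = e'.1.2) :
    e = e' :=
  Subtype.ext <| Prod.ext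
    (le_antisymm (h'.le_fst h.1 (hs ▸ e.2)) (h.le_fst h'.1 (hs ▸ e'.2))) hs

theorem not_singleton (x : Fin (n + 1)) : ¬ IsPathEdge {x} e := by
  rintro ⟨h1, h2, -⟩
  rw [mem_singleton] at h1 h2
  exact (h1 ▸ h2 ▸ e.2).false

theorem of_insert (hx : ∀ w ∈ S, x < w) (hy : IsLeast (S : Set _) y)
    (h : IsPathEdge (insert x S) e) : e.1 = (x, y) ∨ IsPathEdge S e := by
  obtain ⟨h1, h2, h3⟩ := h
  rcases mem_insert.1 h1 with h1 | h1
  · have h2 : e.1.2 ∈ S := (mem_insert.1 h2).resolve_left (h1 ▸ e.2).ne'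
    refine .inl (Prod.ext h1 (le_antisymm ?_ (hy.2 h2)))
    exact (h3 y (mem_insert_of_mem hy.1)).resolve_left (h1 ▸ hx y hy.1).not_ge
  · have h2 : e.1.2 ∈ S := (mem_insert.1 h2).resolve_left ((hx _ h1).trans e.2).ne'
    exact .inr ⟨h1, h2, fun w hw => h3 w (mem_insert_of_mem hw)⟩

theorem of_filter_le (h : IsPathEdge (S.filter (x ≤ ·)) e) : IsPathEdge S e := by
  obtain ⟨h1, h2, h3⟩ := h
  refine ⟨(mem_filter.1 h1).1, (mem_filter.1 h2).1, fun w hw => ?_⟩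
  by_cases hxw : x ≤ w
  exacts [h3 w (mem_filter.2 ⟨hw, hxw⟩), .inl ((not_le.1 hxw).le.trans (mem_filter.1 h1).2)]

end IsPathEdge

variable {S T : Finset (Fin (n + 1))} {x y u w : Fin (n + 1)}

theorem exists_isPathEdge_fst (hu : u ∈ S) (hw : w ∈ S) (huw : u < w) :
    ∃ e, IsPathEdge S e ∧ e.1.1 = u := by
  set R := S.filter (u < ·)
  have hR : R.Nonempty := ⟨w, mem_filter.2 ⟨hw, huw⟩⟩
  have hmem := mem_filter.1 (R.min'_mem hR)
  refine ⟨⟨(u, R.min' hR), hmem.2⟩, ⟨hu, hmem.1, fun v hv => ?_⟩, rfl⟩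
  exact (le_or_gt v u).imp id fun h => R.min'_le v (mem_filter.2 ⟨hv, h⟩)

theorem exists_isPathEdge_snd (hu : u ∈ S) (hw : w ∈ S) (huw : u < w) :
    ∃ e, IsPathEdge S e ∧ e.1.2 = w := by
  set R := S.filter (· < w)
  have hR : R.Nonempty := ⟨u, mem_filter.2 ⟨hu, huw⟩⟩
  have hmem := mem_filter.1 (R.max'_mem hR)
  refine ⟨⟨(R.max' hR, w), hmem.2⟩, ⟨hmem.1, hw, fun v hv => ?_⟩, rfl⟩
  exact (lt_or_ge v w).imp (fun h => R.le_max' v (mem_filter.2 ⟨hv, h⟩)) id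

theorem pathFlow_nonneg (S : Finset (Fin (n + 1))) : 0 ≤ pathFlow S := fun e => by
  unfold pathFlow; split_ifs <;> norm_num

theorem pathFlow_add_ne_zero_iff {e : FlowEdge n} :
    (pathFlow S + pathFlow T) e ≠ 0 ↔ IsPathEdge S e ∨ IsPathEdge T e := by
  simp only [Pi.add_apply, pathFlow]
  split_ifs <;> simp_all

theorem outflow_pathFlow (hy : IsGreatest (S : Set _) y) (k : Fin (n + 1)) :
    outflow (pathFlow S) k = if k ∈ S ∧ k ≠ y then 1 else 0 := by
  rw [outflow_apply]
  split_ifs with hk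
  · obtain ⟨e₀, he₀, rfl⟩ := exists_isPathEdge_fst hk.1 hy.1 (lt_of_le_of_ne (hy.2 hk.1) hk.2)
    rw [sum_eq_single e₀ (fun e _ hne => ?_) (by simp), if_pos rfl, pathFlow, if_pos he₀]
    simp only [pathFlow]
    split_ifs with h1 h2
    exacts [absurd (h2.eq_of_fst_eq he₀ h1) hne, rfl, rfl]
  · refine sum_eq_zero fun e _ => ?_
    simp only [pathFlow]
    split_ifs with h1 h2
    exacts [absurd ⟨h1 ▸ h2.1, (h1 ▸ e.2.trans_le (hy.2 h2.2.1)).ne⟩ hk, rfl, rfl]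

theorem inflow_pathFlow (hx : IsLeast (S : Set _) x) (k : Fin (n + 1)) :
    inflow (pathFlow S) k = if k ∈ S ∧ k ≠ x then 1 else 0 := by
  rw [inflow_apply]
  split_ifs with hk
  · obtain ⟨e₀, he₀, rfl⟩ :=
      exists_isPathEdge_snd hx.1 hk.1 (lt_of_le_of_ne (hx.2 hk.1) hk.2.symm)
    rw [sum_eq_single e₀ (fun e _ hne => ?_) (by simp), if_pos rfl, pathFlow, if_pos he₀]
    simp only [pathFlow]
    split_ifs with h1 h2
    exacts [absurd (h2.eq_of_snd_eq he₀ h1) hne, rfl, rfl]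
  · refine sum_eq_zero fun e _ => ?_
    simp only [pathFlow]
    split_ifs with h1 h2
    exacts [absurd ⟨h1 ▸ h2.2.1, (h1 ▸ (hx.2 h2.1).trans_lt e.2).ne'⟩ hk, rfl, rfl]

theorem netFlow_pathFlow (hx : IsLeast (S : Set _) x) (hy : IsGreatest (S : Set _) y) :
    netFlow (pathFlow S) = Pi.single x 1 - Pi.single y 1 := by
  ext k
  rw [netFlow_apply, outflow_pathFlow hy, inflow_pathFlow hx]
  have hxS : x ∈ S := hx.1
  have hyS : y ∈ S := hy.1
  simp only [Pi.sub_apply, Pi.single_apply]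
  split_ifs <;> simp_all

theorem path_subset_of_injOn {E : Set (FlowEdge n)}
    (hE : Set.InjOn (fun e : FlowEdge n => e.1.1) E)
    (hS : IsLeast (S : Set _) x) (hT : x ∈ T) (hTl : Fin.last n ∈ T)
    (hSE : ∀ e, IsPathEdge S e → e ∈ E) (hTE : ∀ e, IsPathEdge T e → e ∈ E) : S ⊆ T := by
  intro w
  induction w using WellFoundedLT.induction with
  | _ w ih =>
  intro hw
  rcases (hS.2 hw).eq_or_lt with rfl | hxw
  · exact hT
  obtain ⟨e, he, rfl⟩ := exists_isPathEdge_snd hS.1 hw hxw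
  obtain ⟨e', he', hsrc⟩ :=
    exists_isPathEdge_fst (ih _ e.2 he.1) hTl (e.2.trans_le (Fin.le_last _))
  rw [hE (hSE e he) (hTE e' he') hsrc.symm]
  exact he'.2.1

theorem path_eq_of_injOn {E : Set (FlowEdge n)}
    (hE : Set.InjOn (fun e : FlowEdge n => e.1.1) E)
    (hS : IsLeast (S : Set _) x) (hT : IsLeast (T : Set _) x)
    (hSl : Fin.last n ∈ S) (hTl : Fin.last n ∈ T)
    (hSE : ∀ e, IsPathEdge S e → e ∈ E) (hTE : ∀ e, IsPathEdge T e → e ∈ E) : S = T :=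
  (path_subset_of_injOn hE hS hT.1 hTl hSE hTE).antisymm
    (path_subset_of_injOn hE hT hS.1 hSl hTE hSE)

section NonnegSupply

variable (ha : ∀ k ≠ Fin.last n, 0 ≤ a k)
include ha

theorem snd_eq_last_or_outflow_pos (hf : f ∈ flowPolytope n a) {e : FlowEdge n}
    (he : f e ≠ 0) : e.1.2 = Fin.last n ∨ 0 < outflow f e.1.2 := by
  obtain ⟨hf0, hfa⟩ := mem_flowPolytope.1 hf
  refine or_iff_not_imp_left.2 fun hl => ?_
  have hnet : outflow f e.1.2 - inflow f e.1.2 = a e.1.2 := congrFun hfa e.1.2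
  have hfe : 0 < f e := lt_of_le_of_ne (hf0 e) (Ne.symm he)
  linarith [ha _ hl, le_inflow hf0 e]

theorem exists_path_in_support (hf : f ∈ flowPolytope n a) (x : Fin (n + 1))
    (hx : x = Fin.last n ∨ 0 < outflow f x) :
    ∃ S : Finset (Fin (n + 1)), IsLeast (S : Set _) x ∧ Fin.last n ∈ S ∧
      ∀ e, IsPathEdge S e → f e ≠ 0 := by
  induction x using WellFoundedGT.induction with
  | _ x ih =>
  rcases hx with rfl | hx
  · exact ⟨{Fin.last n}, by simp, mem_singleton_self _, fun e he => (he.not_singleton _).elim⟩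
  obtain ⟨e, rfl, he⟩ := exists_pos_of_outflow_pos hx
  obtain ⟨S, hS, hSl, hSf⟩ := ih e.1.2 e.2 (snd_eq_last_or_outflow_pos ha hf he.ne')
  have hlt : ∀ w ∈ S, e.1.1 < w := fun w hw => e.2.trans_le (hS.2 hw)
  refine ⟨insert e.1.1 S, ⟨mem_insert_self _ _, fun w hw => ?_⟩, mem_insert_of_mem hSl,
    fun e' he' => ?_⟩
  · rcases mem_insert.1 hw with rfl | hw
    exacts [le_rfl, (hlt w hw).le]
  · rcases he'.of_insert hlt hS with h | h
    · rw [show e' = e from Subtype.ext h]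
      exact he.ne'
    · exact hSf e' h

theorem injOn_of_mem_extremePoints (hf : f ∈ (flowPolytope n a).extremePoints ℝ) :
    Set.InjOn (fun e : FlowEdge n => e.1.1) f.support := by
  intro e he e' he' (hs : e.1.1 = e'.1.1)
  by_contra hne
  obtain ⟨Sx, hSx, hSxl, hSxf⟩ :=
    exists_path_in_support ha hf.1 _ (snd_eq_last_or_outflow_pos ha hf.1 he)
  obtain ⟨Sy, hSy, hSyl, hSyf⟩ :=
    exists_path_in_support ha hf.1 _ (snd_eq_last_or_outflow_pos ha hf.1 he')
  set c := (Pi.single e 1 + pathFlow Sx) - (Pi.single e' 1 + pathFlow Sy)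
  have hc : netFlow c = 0 := by
    simp only [c, map_sub, map_add, netFlow_single, hs,
      netFlow_pathFlow hSx ⟨hSxl, fun w _ => Fin.le_last w⟩,
      netFlow_pathFlow hSy ⟨hSyl, fun w _ => Fin.le_last w⟩]
    abel
  have hcf : c.support ⊆ f.support := fun e'' => by
    simp only [Function.mem_support]
    contrapose!
    intro h0
    have h1 : e'' ≠ e := by rintro rfl; exact he h0
    have h2 : e'' ≠ e' := by rintro rfl; exact he' h0
    simp [c, pathFlow, h1, h2, mt (hSxf e'') (not_not.2 h0), mt (hSyf e'') (not_not.2 h0)]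
  have hce : c e ≠ 0 := by
    have hx : ¬ IsPathEdge Sx e := fun hp => (hSx.2 hp.1).not_gt e.2
    have hy : ¬ IsPathEdge Sy e := fun hp => (hSy.2 hp.1).not_gt (hs ▸ e'.2)
    simp [c, pathFlow, hx, hy, Ne.symm hne]
  rw [flowPolytope_eq] at hf
  exact hce (congrFun ((mem_extremePoints_iff_ker hf.1).1 hf c hc hcf) e)

end NonnegSupply

def StaysMerged {m : ℕ} (ℓ : Fin m → Bool × Bool) : Prop :=
  ∀ i j, i < j → ℓ i = (true, true) → (ℓ j).1 = (ℓ j).2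

def IsDiagonal {m : ℕ} (ℓ : Fin m → Bool × Bool) : Prop :=
  ∀ i, (ℓ i).1 = (ℓ i).2

instance {m : ℕ} : DecidablePred (StaysMerged (m := m)) :=
  fun _ => inferInstanceAs (Decidable (∀ _, _))

instance {m : ℕ} : DecidablePred (IsDiagonal (m := m)) :=
  fun _ => inferInstanceAs (Decidable (∀ _, _))

section Counting

variable {m : ℕ} {b : Bool × Bool} {ℓ : Fin m → Bool × Bool}

theorem staysMerged_cons :
    StaysMerged (Fin.cons b ℓ : Fin (m + 1) → Bool × Bool) ↔
      (b = (true, true) → IsDiagonal ℓ) ∧ StaysMerged ℓ := by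
  simp [StaysMerged, IsDiagonal, Fin.forall_fin_succ, Fin.succ_lt_succ_iff, imp_forall_iff]

theorem isDiagonal_cons :
    IsDiagonal (Fin.cons b ℓ : Fin (m + 1) → Bool × Bool) ↔ b.1 = b.2 ∧ IsDiagonal ℓ :=
  Fin.forall_fin_succ

theorem isDiagonal_and_staysMerged : IsDiagonal ℓ ∧ StaysMerged ℓ ↔ IsDiagonal ℓ :=
  and_iff_left_of_imp fun h _ j _ _ => h j

theorem card_filter_cons {α : Type*} [Fintype α] [DecidableEq α]
    (p : (Fin (m + 1) → α) → Prop) [DecidablePred p] :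
    #{ℓ | p ℓ} = ∑ b, #{ℓ : Fin m → α | p (Fin.cons b ℓ)} := by
  simp only [card_filter]
  rw [← (Fin.consEquiv fun _ => α).sum_comp, Fintype.sum_prod_type]
  rfl

theorem card_staysMerged_add_card_isDiagonal (m : ℕ) :
    #{ℓ : Fin (m + 1) → Bool × Bool | ℓ (Fin.last m) = (true, true) ∧ StaysMerged ℓ} +
      #{ℓ : Fin (m + 1) → Bool × Bool | ℓ (Fin.last m) = (true, true) ∧ IsDiagonal ℓ} =
      2 * 3 ^ m := by
  induction m with
  | zero => decide
  | succ m ih =>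
    rw [card_filter_cons, card_filter_cons]
    simp [Fintype.sum_prod_type, staysMerged_cons, isDiagonal_cons, ← Fin.succ_last,
      isDiagonal_and_staysMerged]
    rw [pow_succ]
    omega

end Counting

/-- `ℓ v = (v ∈ P, v ∈ Q)` for a path `P` from `0` and a path `Q` from `1` to the last vertex. -/
def IsValidLabel {m : ℕ} (ℓ : Fin (m + 2) → Bool × Bool) : Prop :=
  ℓ 0 = (true, false) ∧ (ℓ 1).2 = true ∧ ℓ (Fin.last (m + 1)) = (true, true) ∧ StaysMerged ℓ

instance {m : ℕ} : DecidablePred (IsValidLabel (m := m)) :=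
  fun _ => inferInstanceAs (Decidable (_ ∧ _))

theorem card_isValidLabel (k : ℕ) :
    #{ℓ : Fin (k + 3) → Bool × Bool | IsValidLabel ℓ} = 2 * 3 ^ k := by
  rw [card_filter_cons]
  simp [IsValidLabel, Fintype.sum_prod_type, staysMerged_cons, ← Fin.succ_last]
  rw [card_filter_cons]
  simp [Fintype.sum_prod_type, staysMerged_cons, isDiagonal_and_staysMerged]
  rw [add_comm]
  exact card_staysMerged_add_card_isDiagonal k

def supply (n : ℕ) (v : Fin (n + 1)) : ℝ :=
  if (v : ℕ) = 0 then 1 else if (v : ℕ) = 1 then 1 else if (v : ℕ) = n then -2 else 0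

theorem supply_nonneg : ∀ v ≠ Fin.last n, 0 ≤ supply n v := by
  intro v hv
  have : (v : ℕ) ≠ n := fun h => hv (Fin.ext h)
  unfold supply
  split_ifs <;> norm_num

section TwoPaths

variable {k : ℕ}

theorem supply_eq : supply (k + 2) =
    Pi.single 0 1 - Pi.single (Fin.last _) 1 + (Pi.single 1 1 - Pi.single (Fin.last _) 1) := by
  ext v
  simp only [supply, Pi.add_apply, Pi.sub_apply, Pi.single_apply, Fin.ext_iff, Fin.val_zero,
    Fin.val_one, Fin.val_last]
  split_ifs <;> first | omega | norm_num

theorem pathFlow_add_mem {P Q : Finset (Fin (k + 3))} (hP : IsLeast (P : Set (Fin (k + 3))) 0)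
    (hQ : IsLeast (Q : Set (Fin (k + 3))) 1) (hPl : Fin.last _ ∈ P) (hQl : Fin.last _ ∈ Q) :
    pathFlow P + pathFlow Q ∈ flowPolytope (k + 2) (supply (k + 2)) := by
  refine mem_flowPolytope.2 ⟨add_nonneg (pathFlow_nonneg P) (pathFlow_nonneg Q), ?_⟩
  rw [map_add, netFlow_pathFlow hP ⟨hPl, fun w _ => Fin.le_last w⟩,
    netFlow_pathFlow hQ ⟨hQl, fun w _ => Fin.le_last w⟩, supply_eq]

def fstPath (ℓ : Fin (k + 3) → Bool × Bool) : Finset (Fin (k + 3)) := {v | (ℓ v).1}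

def sndPath (ℓ : Fin (k + 3) → Bool × Bool) : Finset (Fin (k + 3)) := {v | (ℓ v).2}

def labelFlow (ℓ : Fin (k + 3) → Bool × Bool) : FlowEdge (k + 2) → ℝ :=
  pathFlow (fstPath ℓ) + pathFlow (sndPath ℓ)

theorem injOn_support_labelFlow {ℓ : Fin (k + 3) → Bool × Bool} (hℓ : StaysMerged ℓ) :
    Set.InjOn (fun e : FlowEdge (k + 2) => e.1.1) (labelFlow ℓ).support := by
  have hagree (u : Fin (k + 3)) (hu : u ∈ fstPath ℓ) (hu' : u ∈ sndPath ℓ) (w : Fin (k + 3))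
      (huw : u < w) : w ∈ fstPath ℓ ↔ w ∈ sndPath ℓ := by
    have hboth : ℓ u = (true, true) :=
      Prod.ext (by simpa [fstPath] using hu) (by simpa [sndPath] using hu')
    simp [fstPath, sndPath, hℓ u w huw hboth]
  intro e he e' he' (hs : e.1.1 = e'.1.1)
  rw [Function.mem_support, labelFlow, pathFlow_add_ne_zero_iff] at he he'
  rcases he with h | h <;> rcases he' with h' | h'
  · exact h.eq_of_fst_eq h' hs
  · exact h.eq_of_agree h' hs (hagree _ h.1 (hs ▸ h'.1))
  · exact h.eq_of_agree h' hs fun w hw => (hagree _ (hs ▸ h'.1) h.1 w hw).symm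
  · exact h.eq_of_fst_eq h' hs

namespace IsValidLabel

variable {ℓ : Fin (k + 3) → Bool × Bool} (hℓ : IsValidLabel ℓ)
include hℓ

theorem isLeast_fstPath : IsLeast (fstPath ℓ : Set (Fin (k + 3))) 0 :=
  ⟨by simp [fstPath, hℓ.1], fun w _ => Fin.zero_le w⟩

theorem isLeast_sndPath : IsLeast (sndPath ℓ : Set (Fin (k + 3))) 1 := by
  refine ⟨by simp [sndPath, hℓ.2.1], fun w hw => Fin.one_le_of_ne_zero fun hw0 => ?_⟩
  simp [sndPath, hw0, hℓ.1] at hw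

theorem last_mem_fstPath : Fin.last _ ∈ fstPath ℓ := by simp [fstPath, hℓ.2.2.1]

theorem last_mem_sndPath : Fin.last _ ∈ sndPath ℓ := by simp [sndPath, hℓ.2.2.1]

theorem labelFlow_mem_extremePoints :
    labelFlow ℓ ∈ (flowPolytope (k + 2) (supply (k + 2))).extremePoints ℝ :=
  mem_extremePoints_of_injOn
    (pathFlow_add_mem hℓ.isLeast_fstPath hℓ.isLeast_sndPath hℓ.last_mem_fstPath
      hℓ.last_mem_sndPath)
    (injOn_support_labelFlow hℓ.2.2.2)

end IsValidLabel

theorem injOn_labelFlow : Set.InjOn (labelFlow (k := k)) {ℓ | IsValidLabel ℓ} := by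
  intro ℓ hℓ ℓ' hℓ' h
  have hinj := injOn_support_labelFlow hℓ.2.2.2
  have hsupp (ℓ₀ : Fin (k + 3) → Bool × Bool) (e : FlowEdge (k + 2))
      (he : IsPathEdge (fstPath ℓ₀) e ∨ IsPathEdge (sndPath ℓ₀) e) :
      e ∈ (labelFlow ℓ₀).support :=
    pathFlow_add_ne_zero_iff.2 he
  have hP : fstPath ℓ = fstPath ℓ' :=
    path_eq_of_injOn hinj hℓ.isLeast_fstPath hℓ'.isLeast_fstPath hℓ.last_mem_fstPath
      hℓ'.last_mem_fstPath (fun e he => hsupp ℓ e (.inl he))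
      (fun e he => h ▸ hsupp ℓ' e (.inl he))
  have hQ : sndPath ℓ = sndPath ℓ' :=
    path_eq_of_injOn hinj hℓ.isLeast_sndPath hℓ'.isLeast_sndPath hℓ.last_mem_sndPath
      hℓ'.last_mem_sndPath (fun e he => hsupp ℓ e (.inr he))
      (fun e he => h ▸ hsupp ℓ' e (.inr he))
  funext v
  have h1 := Finset.ext_iff.1 hP v
  have h2 := Finset.ext_iff.1 hQ v
  simp only [fstPath, sndPath, mem_filter, mem_univ, true_and] at h1 h2
  exact Prod.ext (Bool.eq_iff_iff.2 h1) (Bool.eq_iff_iff.2 h2)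

theorem exists_isValidLabel {f : FlowEdge (k + 2) → ℝ}
    (hf : f ∈ (flowPolytope (k + 2) (supply (k + 2))).extremePoints ℝ) :
    ∃ ℓ, IsValidLabel ℓ ∧ labelFlow ℓ = f := by
  have hinj := injOn_of_mem_extremePoints supply_nonneg hf
  obtain ⟨P, hP, hPl, hPf⟩ :=
    exists_path_in_support supply_nonneg hf.1 0 (.inr (outflow_pos hf.1 (by simp [supply])))
  obtain ⟨Q, hQ, hQl, hQf⟩ :=
    exists_path_in_support supply_nonneg hf.1 1 (.inr (outflow_pos hf.1 (by simp [supply])))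
  have htail (u : Fin (k + 3)) (hu : u ∈ P) (hu' : u ∈ Q) :
      P.filter (u ≤ ·) = Q.filter (u ≤ ·) :=
    path_eq_of_injOn hinj ⟨by simp [hu], fun w hw => (mem_filter.1 hw).2⟩
      ⟨by simp [hu'], fun w hw => (mem_filter.1 hw).2⟩ (by simp [hPl, Fin.le_last])
      (by simp [hQl, Fin.le_last]) (fun e he => hPf e he.of_filter_le)
      (fun e he => hQf e he.of_filter_le)
  set ℓ : Fin (k + 3) → Bool × Bool := fun v => (decide (v ∈ P), decide (v ∈ Q))
  have hℓP : fstPath ℓ = P := by ext; simp [fstPath, ℓ]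
  have hℓQ : sndPath ℓ = Q := by ext; simp [sndPath, ℓ]
  refine ⟨ℓ, ⟨?_, ?_, ?_, ?_⟩, ?_⟩
  · have h0 : (0 : Fin (k + 3)) ∉ Q := fun h => by simpa using hQ.2 h
    simp [ℓ, mem_coe.1 hP.1, h0]
  · simp [ℓ, mem_coe.1 hQ.1]
  · simp [ℓ, hPl, hQl]
  · intro i j hij hi
    have hj := Finset.ext_iff.1 (htail i (by simpa [ℓ] using congrArg Prod.fst hi)
      (by simpa [ℓ] using congrArg Prod.snd hi)) j
    simpa [ℓ, hij.le] using hj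
  · have hg := pathFlow_add_mem hP hQ hPl hQl
    rw [flowPolytope_eq] at hf hg
    rw [labelFlow, hℓP, hℓQ]
    refine eq_of_mem_extremePoints_of_support_subset hf hg fun e he => ?_
    rcases pathFlow_add_ne_zero_iff.1 he with h | h
    exacts [hPf e h, hQf e h]

theorem extremePoints_eq_image_labelFlow :
    (flowPolytope (k + 2) (supply (k + 2))).extremePoints ℝ =
      labelFlow '' {ℓ | IsValidLabel ℓ} := by
  ext f
  constructor
  · intro hf
    obtain ⟨ℓ, hℓ, rfl⟩ := exists_isValidLabel hf
    exact ⟨ℓ, hℓ, rfl⟩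
  · rintro ⟨ℓ, hℓ, rfl⟩
    exact hℓ.labelFlow_mem_extremePoints

end TwoPaths

end FlowPolytope

/-- For `n ≥ 2`, the flow polytope `F_{K_{n+1}}(1,1,0,…,0,−2)` has exactly
`2 ⬝ 3^{n−2}` vertices (extreme points). -/
theorem stmt8 (n : ℕ) (hn : 2 ≤ n) :
    (Set.extremePoints ℝ (flowPolytope n (fun k =>
        if (k : ℕ) = 0 then 1
        else if (k : ℕ) = 1 then 1
        else if (k : ℕ) = n then -2
        else 0))).ncard = 2 * 3 ^ (n - 2) := by
  obtain ⟨k, rfl⟩ := Nat.exists_eq_add_of_le' hn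
  change ((flowPolytope (k + 2) (FlowPolytope.supply (k + 2))).extremePoints ℝ).ncard = _
  rw [FlowPolytope.extremePoints_eq_image_labelFlow, FlowPolytope.injOn_labelFlow.ncard_image,
    ← coe_filter_univ, Set.ncard_coe_finset, FlowPolytope.card_isValidLabel, Nat.add_sub_cancel]
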